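/- arXiv:2509.22417 — 2 statements merged into one kernel-verified Lean document; each statement's English description precedes it below -/
import Mathlib

section
/- Fix blocks B₁, …, B_D and let χ₊ : ℕ → Fin D be pseudo-ergodic, with semi-infinite Jacobi operators J₊(χ₊) and J₋(χ₊) built from the reflection-doubling of χ₊. Then for every block sequence χ' : ℤ → Fin D one has σ(J(χ')) ⊆ σ(J₊(χ₊)) and σ(J(χ')) ⊆ σ(J₋(χ₊)). -/
/-- A semi-infinite sequence is pseudo-ergodic if it contains every finite word. -/
def PseudoErgodicN {D : ℕ} (χ : ℕ → Fin D) : Prop :=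
  ∀ M : ℕ, 1 ≤ M → ∀ w : Fin M → Fin D, ∃ j : ℕ, ∀ k : Fin M, χ (j + (k : ℕ)) = w k

noncomputable section

/-- A block: a nonempty finite list of triples `(v, ℓ, s)` of positive reals. -/
def Block : Type :=
  {L : List (ℝ × ℝ × ℝ) // L ≠ [] ∧ ∀ t ∈ L, 0 < t.1 ∧ 0 < t.2.1 ∧ 0 < t.2.2}

/-- The single-resonator propagation matrix `P^λ_{ℓ,s,v}`. -/
def propMat (lam ℓ s v : ℝ) : Matrix (Fin 2) (Fin 2) ℝ :=
  !![1 - s * ℓ * lam / v ^ 2, s; -(ℓ * lam / v ^ 2), 1]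

/-- Propagation matrix of a resonator triple `(v, ℓ, s)`. -/
def propOf (lam : ℝ) (t : ℝ × ℝ × ℝ) : Matrix (Fin 2) (Fin 2) ℝ :=
  propMat lam t.2.1 t.2.2 t.1

/-- The block propagation matrix `𝒫^λ_B = P^λ_{ℓ_L,s_L,v_L} ⋯ P^λ_{ℓ₁,s₁,v₁}`. -/
def blockMat (lam : ℝ) (Bd : Block) : Matrix (Fin 2) (Fin 2) ℝ :=
  ((Bd.1.map (propOf lam)).reverse).prod

/-- `data` (with block-start indices `st`) is the bi-infinite concatenation of the
blocks `B (χ j)`. -/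
def IsConcat {D : ℕ} (B : Fin D → Block) (χ : ℤ → Fin D)
    (data : ℤ → ℝ × ℝ × ℝ) (st : ℤ → ℤ) : Prop :=
  st 0 = 0 ∧ (∀ j : ℤ, st (j + 1) = st j + ((B (χ j)).1.length : ℤ)) ∧
    ∀ (j : ℤ) (k : ℕ) (hk : k < (B (χ j)).1.length),
      data (st j + (k : ℤ)) = (B (χ j)).1.get ⟨k, hk⟩

/-- `ℓ²(ℤ)`. -/
abbrev Hint := lp (fun _ : ℤ => ℝ) 2
/-- `ℓ²(ℤ≥0)`. -/
abbrev Hnat := lp (fun _ : ℕ => ℝ) 2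
/-- `ℓ²(ℤ<0)`. -/
abbrev Hneg := lp (fun _ : {i : ℤ // i < 0} => ℝ) 2

/-- The off-diagonal band `a(i) = −v_i v_{i+1}/(s_i √(ℓ_i ℓ_{i+1}))`,
with `data i = (v_i, ℓ_i, s_i)`. -/
def aSeq (data : ℤ → ℝ × ℝ × ℝ) (i : ℤ) : ℝ :=
  -((data i).1 * (data (i + 1)).1) /
    ((data i).2.2 * Real.sqrt ((data i).2.1 * (data (i + 1)).2.1))

/-- The diagonal band `b(i) = (v_i²/ℓ_i)(1/s_{i−1} + 1/s_i)`. -/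
def bSeq (data : ℤ → ℝ × ℝ × ℝ) (i : ℤ) : ℝ :=
  ((data i).1 ^ 2 / (data i).2.1) * (1 / (data (i - 1)).2.2 + 1 / (data i).2.2)

/-- `J` is the Jacobi operator on `ℓ²(ℤ)` with bands `a`, `b` built from `data`. -/
def IsJacobiOf (data : ℤ → ℝ × ℝ × ℝ) (J : Hint →L[ℝ] Hint) : Prop :=
  ∀ (x : Hint) (i : ℤ),
    J x i = aSeq data (i - 1) * x (i - 1) + bSeq data i * x i + aSeq data i * x (i + 1)

/-- `Jp` is the positive semi-infinite Jacobi operator with corner entry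
`b(0) = v₀²/(ℓ₀s₀)`. -/
def IsJacobiPlusOf (data : ℤ → ℝ × ℝ × ℝ) (Jp : Hnat →L[ℝ] Hnat) : Prop :=
  (∀ x : Hnat,
      Jp x 0 = (data 0).1 ^ 2 / ((data 0).2.1 * (data 0).2.2) * x 0 + aSeq data 0 * x 1) ∧
  (∀ (x : Hnat) (n : ℕ),
      Jp x (n + 1) = aSeq data (n : ℤ) * x n + bSeq data ((n : ℤ) + 1) * x (n + 1) +
        aSeq data ((n : ℤ) + 1) * x (n + 2))

/-- `Jm` is the negative semi-infinite Jacobi operator with corner entry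
`b(−1) = v₋₁²/(ℓ₋₁s₋₂)`. -/
def IsJacobiMinusOf (data : ℤ → ℝ × ℝ × ℝ) (Jm : Hneg →L[ℝ] Hneg) : Prop :=
  (∀ x : Hneg,
      Jm x ⟨-1, by norm_num⟩ =
        (data (-1)).1 ^ 2 / ((data (-1)).2.1 * (data (-2)).2.2) * x ⟨-1, by norm_num⟩ +
          aSeq data (-2) * x ⟨-2, by norm_num⟩) ∧
  (∀ (x : Hneg) (i : ℤ) (hi : i < -1),
      Jm x ⟨i, by omega⟩ =
        aSeq data (i - 1) * x ⟨i - 1, by omega⟩ + bSeq data i * x ⟨i, by omega⟩ +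
          aSeq data i * x ⟨i + 1, by omega⟩)

/-- The reflection-doubling of a semi-infinite sequence. -/
def reflDouble {D : ℕ} (χp : ℕ → Fin D) : ℤ → Fin D :=
  fun i => if 0 ≤ i then χp i.toNat else χp (-i - 1).toNat

open scoped RealInnerProductSpace NNReal ENNReal

/-!
For self-adjoint `J'`, a real `λ` lies outside `σ(J')` as soon as `J' - λ` is bounded below.
If `λ ∉ σ(J₊)`, then `J₊ - λ` is bounded below. A vector `x ∈ ℓ²(ℤ)` supported in `[-N, N]`
only sees the resonators of finitely many blocks of `χ'`; by pseudo-ergodicity this word of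
blocks occurs in `χ₊` arbitrarily far out, hence on both half-lines of its reflection-doubling.
Translating `x` onto such an occurrence gives `y` with `‖y‖ = ‖x‖` and
`‖(J± - λ) y‖ = ‖(J' - λ) x‖`, the corner entries never being reached. So `J' - λ` is bounded
below on a dense set, hence everywhere.
-/

theorem IsSelfAdjoint.isUnit_of_antilipschitz {𝕜 E : Type*} [RCLike 𝕜] [NormedAddCommGroup E]
    [InnerProductSpace 𝕜 E] [CompleteSpace E] {T : E →L[𝕜] E} (hT : IsSelfAdjoint T)
    {K : ℝ≥0} (hK : AntilipschitzWith K T) : IsUnit T := by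
  rw [ContinuousLinearMap.isUnit_iff_bijective,
    ContinuousLinearMap.bijective_iff_dense_range_and_antilipschitz]
  refine ⟨?_, K, hK⟩
  rw [Submodule.topologicalClosure_eq_top_iff, ContinuousLinearMap.orthogonal_range,
    hT.adjoint_eq]
  exact LinearMap.ker_eq_bot.mpr hK.injective

theorem spectrum_subset_of_exists_norm_eq {E F : Type*} [NormedAddCommGroup E]
    [InnerProductSpace ℝ E] [CompleteSpace E] [NormedAddCommGroup F] [NormedSpace ℝ F]
    {T : E →L[ℝ] E} (hT : IsSelfAdjoint T) (S : F →L[ℝ] F) {s : Set E} (hs : Dense s)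
    (h : ∀ x ∈ s, ∃ y : F, ‖y‖ = ‖x‖ ∧ ∀ μ : ℝ,
      ‖(algebraMap ℝ (F →L[ℝ] F) μ - S) y‖ = ‖(algebraMap ℝ (E →L[ℝ] E) μ - T) x‖) :
    spectrum ℝ T ⊆ spectrum ℝ S := by
  intro μ hμT
  by_contra hμS
  obtain ⟨u, hu⟩ := spectrum.notMem_iff.mp hμS
  set K := ‖(↑u⁻¹ : F →L[ℝ] F)‖₊
  have hS : ∀ y, ‖y‖ ≤ K * ‖(algebraMap ℝ (F →L[ℝ] F) μ - S) y‖ := fun y => by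
    rw [← hu]
    calc ‖y‖ = ‖((↑u⁻¹ * ↑u : F →L[ℝ] F)) y‖ := by rw [Units.inv_mul]; rfl
      _ ≤ K * ‖(u : F →L[ℝ] F) y‖ := (↑u⁻¹ : F →L[ℝ] F).le_opNorm _
  have hT' : ∀ x, ‖x‖ ≤ K * ‖(algebraMap ℝ (E →L[ℝ] E) μ - T) x‖ := by
    refine hs.induction (fun x hx => ?_) (isClosed_le continuous_norm (by fun_prop))
    obtain ⟨y, hy, hμ⟩ := h x hx
    rw [← hy, ← hμ]
    exact hS y
  have hsa : IsSelfAdjoint (algebraMap ℝ (E →L[ℝ] E) μ - T) :=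
    ((IsSelfAdjoint.all μ).algebraMap _).sub hT
  exact spectrum.mem_iff.mp hμT
    (hsa.isUnit_of_antilipschitz (ContinuousLinearMap.antilipschitz_of_bound _ hT'))

namespace lp

variable {ι κ E : Type*} [NormedAddCommGroup E]

theorem isSelfAdjoint_of_single_apply [DecidableEq ι]
    (T : lp (fun _ : ι => ℝ) 2 →L[ℝ] lp (fun _ : ι => ℝ) 2)
    (h : ∀ i j, T (lp.single 2 i 1) j = T (lp.single 2 j 1) i) : IsSelfAdjoint T := by
  have hcoord : ∀ (z : lp (fun _ : ι => ℝ) 2) j, z j = ⟪z, lp.single 2 j 1⟫ := fun z j => by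
    simp [lp.inner_single_right]
  rw [ContinuousLinearMap.isSelfAdjoint_iff']
  refine lp.ext_continuousLinearMap (by norm_num) fun i => ContinuousLinearMap.ext_ring ?_
  ext j
  change (ContinuousLinearMap.adjoint T (lp.single 2 i 1)) j = T (lp.single 2 i 1) j
  rw [hcoord, ContinuousLinearMap.adjoint_inner_left, real_inner_comm, ← hcoord, h]

theorem _root_.Memℓp.comp_injective {p : ℝ≥0∞} (hp : 0 < p.toReal) {f : κ → E}
    (hf : Memℓp f p) {e : ι → κ} (he : e.Injective) : Memℓp (f ∘ e) p :=
  (memℓp_gen_iff hp).mpr (((memℓp_gen_iff hp).mp hf).comp_injective he)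

theorem norm_eq_of_comp_injective {p : ℝ≥0∞} (hp : 0 < p.toReal) {f : lp (fun _ : ι => E) p}
    {g : lp (fun _ : κ => E) p} {e : ι → κ} (he : e.Injective) (hfg : ∀ i, f i = g (e i))
    (hg : ∀ k ∉ Set.range e, g k = 0) : ‖f‖ = ‖g‖ := by
  rw [lp.norm_eq_tsum_rpow hp f, lp.norm_eq_tsum_rpow hp g]
  congr 1
  refine (tsum_congr fun i => by rw [hfg]).trans (he.tsum_eq fun k hk => ?_)
  by_contra hke
  exact hk (by simp [hg k hke, hp.ne'])

theorem algebraMap_sub_apply (A : lp (fun _ : ι => ℝ) 2 →L[ℝ] lp (fun _ : ι => ℝ) 2) (μ : ℝ)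
    (z : lp (fun _ : ι => ℝ) 2) (k : ι) : (algebraMap ℝ _ μ - A) z k = μ * z k - A z k :=
  rfl

theorem exists_norm_eq_of_apply_comp {e : ι → κ} (he : e.Injective)
    (S : lp (fun _ : ι => ℝ) 2 →L[ℝ] lp (fun _ : ι => ℝ) 2)
    (T : lp (fun _ : κ => ℝ) 2 →L[ℝ] lp (fun _ : κ => ℝ) 2) (x : lp (fun _ : κ => ℝ) 2)
    (hx : ∀ k ∉ Set.range e, x k = 0) (hTx : ∀ k ∉ Set.range e, T x k = 0)
    (hS : ∀ y : lp (fun _ : ι => ℝ) 2, (∀ i, y i = x (e i)) → ∀ i, S y i = T x (e i)) :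
    ∃ y : lp (fun _ : ι => ℝ) 2, ‖y‖ = ‖x‖ ∧ ∀ μ : ℝ,
      ‖(algebraMap ℝ _ μ - S) y‖ = ‖(algebraMap ℝ _ μ - T) x‖ := by
  have h2 : 0 < (2 : ℝ≥0∞).toReal := by norm_num
  let y : lp (fun _ : ι => ℝ) 2 := ⟨x ∘ e, (lp.memℓp x).comp_injective h2 he⟩
  refine ⟨y, lp.norm_eq_of_comp_injective h2 he (fun _ => rfl) hx, fun μ => ?_⟩
  refine lp.norm_eq_of_comp_injective h2 he (fun i => ?_) fun k hk => ?_
  · rw [algebraMap_sub_apply, algebraMap_sub_apply, hS y (fun _ => rfl) i]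
    rfl
  · rw [algebraMap_sub_apply, hx k hk, hTx k hk, mul_zero, sub_zero]

end lp

theorem dense_setOf_forall_natAbs_lt_eq_zero :
    Dense {x : Hint | ∃ N : ℕ, ∀ q : ℤ, N < q.natAbs → x q = 0} := by
  intro x
  refine mem_closure_of_tendsto (lp.hasSum_single (by norm_num) x)
    (Filter.Eventually.of_forall fun F => ⟨F.sup Int.natAbs, fun q hq => ?_⟩)
  have hqF : q ∉ F := fun hq' => (Finset.le_sup (f := Int.natAbs) hq').not_gt hq
  rw [lp.coeFn_sum, Finset.sum_apply]
  exact Finset.sum_eq_zero fun i hi => lp.single_apply_ne _ _ _ (ne_of_mem_of_not_mem hi hqF).symm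

def jacobiApply (d : ℤ → ℝ × ℝ × ℝ) (x : ℤ → ℝ) (i : ℤ) : ℝ :=
  aSeq d (i - 1) * x (i - 1) + bSeq d i * x i + aSeq d i * x (i + 1)

theorem jacobiApply_eq_zero {d : ℤ → ℝ × ℝ × ℝ} {x : ℤ → ℝ} {i : ℤ} (h₁ : x (i - 1) = 0)
    (h₂ : x i = 0) (h₃ : x (i + 1) = 0) : jacobiApply d x i = 0 := by
  simp [jacobiApply, h₁, h₂, h₃]

theorem jacobiApply_comp_sub (d : ℤ → ℝ × ℝ × ℝ) (x : ℤ → ℝ) (t i : ℤ) :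
    jacobiApply d (fun q => x (q - t)) i = jacobiApply (fun p => d (p + t)) x (i - t) := by
  obtain ⟨q, rfl⟩ : ∃ q, i = q + t := ⟨i - t, by ring⟩
  simp only [jacobiApply, aSeq, bSeq, add_sub_cancel_right, sub_add_cancel]
  rw [show q + t - 1 - t = q - 1 by ring, show q + t + 1 - t = q + 1 by ring,
    show q - 1 + t = q + t - 1 by ring, show q + 1 + t = q + t + 1 by ring]

theorem jacobiApply_congr {d d' : ℤ → ℝ × ℝ × ℝ} {x : ℤ → ℝ} {N : ℕ}
    (hx : ∀ q : ℤ, N < q.natAbs → x q = 0) (hd : ∀ p : ℤ, p.natAbs ≤ N + 1 → d p = d' p)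
    (i : ℤ) : jacobiApply d x i = jacobiApply d' x i := by
  have near : ∀ q, x q ≠ 0 → ∀ r, (r - q).natAbs ≤ 1 → d r = d' r := fun q hq r hr =>
    hd r (by have := mt (hx q) hq; omega)
  unfold jacobiApply
  refine congrArg₂ (· + ·) (congrArg₂ (· + ·) ?_ ?_) ?_
  · rcases eq_or_ne (x (i - 1)) 0 with h | h
    · simp [h]
    · rw [aSeq, aSeq, near _ h (i - 1) (by omega), near _ h (i - 1 + 1) (by omega)]
  · rcases eq_or_ne (x i) 0 with h | h
    · simp [h]
    · rw [bSeq, bSeq, near _ h i (by omega), near _ h (i - 1) (by omega)]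
  · rcases eq_or_ne (x (i + 1)) 0 with h | h
    · simp [h]
    · rw [aSeq, aSeq, near _ h i (by omega), near _ h (i + 1) (by omega)]

theorem IsJacobiOf.isSelfAdjoint {d : ℤ → ℝ × ℝ × ℝ} {J : Hint →L[ℝ] Hint}
    (hJ : IsJacobiOf d J) : IsSelfAdjoint J := by
  refine lp.isSelfAdjoint_of_single_apply J fun i j => ?_
  rw [hJ, hJ]
  simp only [lp.single_apply, Pi.single_apply]
  split_ifs <;> first | omega | (subst_vars; simp)

section HalfLine

variable {d d' : ℤ → ℝ × ℝ × ℝ} {J' : Hint →L[ℝ] Hint}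

theorem IsJacobiOf.apply_eq (hJ : IsJacobiOf d J') (x : Hint) (i : ℤ) :
    J' x i = jacobiApply d x i :=
  hJ x i

theorem IsJacobiPlusOf.apply_eq {Jp : Hnat →L[ℝ] Hnat} (hJ : IsJacobiPlusOf d Jp) {y : Hnat}
    {z : ℤ → ℝ} (hyz : ∀ n : ℕ, y n = z n) (hz₁ : z (-1) = 0) (hz₀ : z 0 = 0) (n : ℕ) :
    Jp y n = jacobiApply d z n := by
  cases n with
  | zero =>
    rw [hJ.1, hyz, hyz]
    simp [jacobiApply, hz₁, hz₀]
  | succ n =>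
    rw [hJ.2, hyz, hyz, hyz]
    simp only [jacobiApply]
    push_cast
    ring_nf

theorem IsJacobiMinusOf.apply_eq {Jm : Hneg →L[ℝ] Hneg} (hJ : IsJacobiMinusOf d Jm) {y : Hneg}
    {z : ℤ → ℝ} (hyz : ∀ i : {i : ℤ // i < 0}, y i = z i) (hz₁ : z (-1) = 0) (hz₀ : z 0 = 0)
    (i : {i : ℤ // i < 0}) : Jm y i = jacobiApply d z i := by
  obtain ⟨i, hi⟩ := i
  obtain hi' | rfl := (show i ≤ -1 by omega).lt_or_eq
  · rw [hJ.2 y i hi', hyz, hyz, hyz]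
    rfl
  · rw [hJ.1, hyz, hyz]
    simp [jacobiApply, hz₁, hz₀]

theorem IsJacobiPlusOf.exists_norm_eq {Jp : Hnat →L[ℝ] Hnat} (hJp : IsJacobiPlusOf d Jp)
    (hJ' : IsJacobiOf d' J') {N : ℕ} {t : ℤ} (ht : N + 1 ≤ t)
    (hd : ∀ p : ℤ, p.natAbs ≤ N + 1 → d (p + t) = d' p) {x : Hint}
    (hx : ∀ q : ℤ, N < q.natAbs → x q = 0) :
    ∃ y : Hnat, ‖y‖ = ‖x‖ ∧ ∀ μ : ℝ,
      ‖(algebraMap ℝ _ μ - Jp) y‖ = ‖(algebraMap ℝ _ μ - J') x‖ := by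
  have hrange : ∀ k ∉ Set.range (fun n : ℕ => (n : ℤ) - t), k + t < 0 := fun k hk => by
    by_contra h
    exact hk ⟨(k + t).toNat, by simp only; omega⟩
  refine lp.exists_norm_eq_of_apply_comp (e := fun n : ℕ => (n : ℤ) - t)
    (fun m n h => by simpa using h) Jp J' x
    (fun k hk => hx k (by have := hrange k hk; omega)) (fun k hk => ?_) (fun y hy n => ?_)
  · have := hrange k hk
    rw [hJ'.apply_eq]
    exact jacobiApply_eq_zero (hx _ (by omega)) (hx _ (by omega)) (hx _ (by omega))
  · rw [hJp.apply_eq (z := fun q => x (q - t)) hy (hx _ (by omega)) (hx _ (by omega)),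
      jacobiApply_comp_sub, jacobiApply_congr hx hd, hJ'.apply_eq]

theorem IsJacobiMinusOf.exists_norm_eq {Jm : Hneg →L[ℝ] Hneg} (hJm : IsJacobiMinusOf d Jm)
    (hJ' : IsJacobiOf d' J') {N : ℕ} {t : ℤ} (ht : t + (N + 2) ≤ 0)
    (hd : ∀ p : ℤ, p.natAbs ≤ N + 1 → d (p + t) = d' p) {x : Hint}
    (hx : ∀ q : ℤ, N < q.natAbs → x q = 0) :
    ∃ y : Hneg, ‖y‖ = ‖x‖ ∧ ∀ μ : ℝ,
      ‖(algebraMap ℝ _ μ - Jm) y‖ = ‖(algebraMap ℝ _ μ - J') x‖ := by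
  have hrange : ∀ k ∉ Set.range (fun i : {i : ℤ // i < 0} => (i : ℤ) - t), 0 ≤ k + t :=
    fun k hk => by
      by_contra h
      exact hk ⟨⟨k + t, by omega⟩, by simp⟩
  refine lp.exists_norm_eq_of_apply_comp (e := fun i : {i : ℤ // i < 0} => (i : ℤ) - t)
    (fun i j h => Subtype.ext (by simpa using h)) Jm J' x
    (fun k hk => hx k (by have := hrange k hk; omega)) (fun k hk => ?_) (fun y hy i => ?_)
  · have := hrange k hk
    rw [hJ'.apply_eq]
    exact jacobiApply_eq_zero (hx _ (by omega)) (hx _ (by omega)) (hx _ (by omega))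
  · rw [hJm.apply_eq (z := fun q => x (q - t)) hy (hx _ (by omega)) (hx _ (by omega)),
      jacobiApply_comp_sub, jacobiApply_congr hx hd, hJ'.apply_eq]

end HalfLine

section Concatenation

variable {D : ℕ} {B : Fin D → Block} {χ χ' : ℤ → Fin D} {d d' : ℤ → ℝ × ℝ × ℝ} {s s' : ℤ → ℤ}

theorem IsConcat.sub_le_sub (h : IsConcat B χ d s) {j j' : ℤ} (hj : j ≤ j') :
    j' - j ≤ s j' - s j := by
  induction j', hj using Int.leInduction with
  | base => simp
  | succ n _ ih =>
    have := List.length_pos_iff.mpr (B (χ n)).2.1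
    rw [h.2.1 n]
    omega

theorem IsConcat.data_eq_of_block_eq (h : IsConcat B χ d s) (h' : IsConcat B χ' d' s')
    {j j' : ℤ} (hb : χ j = χ' j') {k : ℕ} (hk : k < (B (χ j)).1.length) :
    d (s j + k) = d' (s' j' + k) := by
  rw [h.2.2 j k hk, h'.2.2 j' k (hb ▸ hk)]
  simp only [List.get_eq_getElem, hb]

theorem IsConcat.data_eq_of_blocks_eq (h : IsConcat B χ d s) (h' : IsConcat B χ' d' s')
    {j j' : ℤ} {M : ℕ} (hw : ∀ k < M, χ (j + k) = χ' (j' + k)) :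
    s (j + M) - s j = s' (j' + M) - s' j' ∧
      ∀ q, s j ≤ q → q < s (j + M) → d q = d' (q - s j + s' j') := by
  induction M with
  | zero => exact ⟨by simp, fun q hq hq' => by simp at hq'; omega⟩
  | succ M ih =>
    obtain ⟨hlen, hdata⟩ := ih fun k hk => hw k (by omega)
    have hb := hw M (by omega)
    have hs := h.2.1 (j + M)
    have hs' := h'.2.1 (j' + M)
    rw [← hb] at hs'
    push_cast
    rw [← add_assoc, ← add_assoc, hs, hs']
    refine ⟨by omega, fun q hq hq' => ?_⟩
    rcases lt_or_ge q (s (j + M)) with hlt | hge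
    · exact hdata q hq hlt
    · obtain ⟨k, rfl⟩ : ∃ k : ℕ, q = s (j + M) + k := ⟨(q - s (j + M)).toNat, by omega⟩
      rw [h.data_eq_of_block_eq h' hb (by omega)]
      congr 1
      omega

/-- Every block has at least one resonator, so the `2N + 3` blocks starting at block `-(N + 1)`
cover the resonators `-(N + 1), …, N + 1`. -/
theorem IsConcat.exists_shift_eq (h : IsConcat B χ d s) (h' : IsConcat B χ' d' s') (N : ℕ)
    {j : ℤ} (hw : ∀ k < 2 * N + 3, χ (j + k) = χ' (-(N + 1) + k)) :
    ∃ t, s j + (N + 1) ≤ t ∧ t + (N + 2) ≤ s (j + (2 * N + 3 : ℕ)) ∧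
      ∀ p : ℤ, p.natAbs ≤ N + 1 → d (p + t) = d' p := by
  obtain ⟨hlen, hdata⟩ := h.data_eq_of_blocks_eq h' hw
  have hleft := h'.sub_le_sub (show -(N + 1 : ℤ) ≤ 0 by omega)
  have hright := h'.sub_le_sub (show (0 : ℤ) ≤ -(N + 1) + (2 * N + 3 : ℕ) by omega)
  rw [h'.1] at hleft hright
  refine ⟨s j - s' (-(N + 1)), by omega, by omega, fun p hp => ?_⟩
  rw [hdata _ (by omega) (by omega)]
  congr 1
  ring

end Concatenation

namespace PseudoErgodicN

variable {D : ℕ} {χp : ℕ → Fin D}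

theorem exists_reflDouble_eq_of_nonneg (h : PseudoErgodicN χp) (M : ℕ) (w : ℕ → Fin D) :
    ∃ j : ℤ, 0 ≤ j ∧ ∀ k < M, reflDouble χp (j + k) = w k := by
  obtain ⟨j, hj⟩ := h (M + 1) (by omega) fun k => w k
  refine ⟨j, by positivity, fun k hk => ?_⟩
  rw [reflDouble, if_pos (by positivity), show ((j : ℤ) + k).toNat = j + k by omega]
  exact hj ⟨k, by omega⟩

theorem exists_reflDouble_eq_of_nonpos (h : PseudoErgodicN χp) (M : ℕ) (w : ℕ → Fin D) :
    ∃ j : ℤ, j + M ≤ 0 ∧ ∀ k < M, reflDouble χp (j + k) = w k := by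
  obtain ⟨m, hm⟩ := h (M + 1) (by omega) fun r => w (M - r)
  refine ⟨-m - (M + 1), by omega, fun k hk => ?_⟩
  rw [reflDouble, if_neg (by omega),
    show (-(-(m : ℤ) - (M + 1) + k) - 1).toNat = m + (M - k) by omega]
  simpa [Nat.sub_sub_self hk.le] using hm ⟨M - k, by omega⟩

end PseudoErgodicN

section Spectrum

variable {D : ℕ} {B : Fin D → Block} {χp : ℕ → Fin D} {data : ℤ → ℝ × ℝ × ℝ} {st : ℤ → ℤ}
  {χ' : ℤ → Fin D} {data' : ℤ → ℝ × ℝ × ℝ} {st' : ℤ → ℤ} {J' : Hint →L[ℝ] Hint}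

theorem spectrum_subset_spectrum_jacobiPlus (hχp : PseudoErgodicN χp)
    (hconcat : IsConcat B (reflDouble χp) data st) {Jp : Hnat →L[ℝ] Hnat}
    (hJp : IsJacobiPlusOf data Jp) (hconcat' : IsConcat B χ' data' st')
    (hJ' : IsJacobiOf data' J') : spectrum ℝ J' ⊆ spectrum ℝ Jp := by
  refine spectrum_subset_of_exists_norm_eq hJ'.isSelfAdjoint Jp
    dense_setOf_forall_natAbs_lt_eq_zero ?_
  rintro x ⟨N, hx⟩
  obtain ⟨j, hj, hw⟩ :=
    hχp.exists_reflDouble_eq_of_nonneg (2 * N + 3) fun k => χ' (-(N + 1) + k)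
  obtain ⟨t, ht, -, hd⟩ := hconcat.exists_shift_eq hconcat' N hw
  have hst := hconcat.sub_le_sub hj
  rw [hconcat.1] at hst
  exact hJp.exists_norm_eq hJ' (by omega) hd hx

theorem spectrum_subset_spectrum_jacobiMinus (hχp : PseudoErgodicN χp)
    (hconcat : IsConcat B (reflDouble χp) data st) {Jm : Hneg →L[ℝ] Hneg}
    (hJm : IsJacobiMinusOf data Jm) (hconcat' : IsConcat B χ' data' st')
    (hJ' : IsJacobiOf data' J') : spectrum ℝ J' ⊆ spectrum ℝ Jm := by
  refine spectrum_subset_of_exists_norm_eq hJ'.isSelfAdjoint Jm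
    dense_setOf_forall_natAbs_lt_eq_zero ?_
  rintro x ⟨N, hx⟩
  obtain ⟨j, hj, hw⟩ :=
    hχp.exists_reflDouble_eq_of_nonpos (2 * N + 3) fun k => χ' (-(N + 1) + k)
  obtain ⟨t, -, ht, hd⟩ := hconcat.exists_shift_eq hconcat' N hw
  have hst := hconcat.sub_le_sub hj
  rw [hconcat.1] at hst
  exact hJm.exists_norm_eq hJ' (by omega) hd hx

end Spectrum

theorem stmt_11 (D : ℕ) (B : Fin D → Block)
    (χp : ℕ → Fin D) (hχp : PseudoErgodicN χp)
    (data : ℤ → ℝ × ℝ × ℝ) (st : ℤ → ℤ)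
    (hconcat : IsConcat B (reflDouble χp) data st)
    (Jp : Hnat →L[ℝ] Hnat) (hJp : IsJacobiPlusOf data Jp)
    (Jm : Hneg →L[ℝ] Hneg) (hJm : IsJacobiMinusOf data Jm)
    (χ' : ℤ → Fin D) (data' : ℤ → ℝ × ℝ × ℝ) (st' : ℤ → ℤ)
    (hconcat' : IsConcat B χ' data' st')
    (J' : Hint →L[ℝ] Hint) (hJ' : IsJacobiOf data' J') :
    spectrum ℝ J' ⊆ spectrum ℝ Jp ∧ spectrum ℝ J' ⊆ spectrum ℝ Jm :=
  ⟨spectrum_subset_spectrum_jacobiPlus hχp hconcat hJp hconcat' hJ',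
    spectrum_subset_spectrum_jacobiMinus hχp hconcat hJm hconcat' hJ'⟩
end
end

section
/- Fix blocks B₁, …, B_D, let χ₊ : ℕ → Fin D be a semi-infinite block sequence with reflection-doubling χ, and let λ ∈ ℝ. If there exist a nonzero x ∈ ℓ²(ℤ≥0) with (J₊(χ₊) − λ)x = 0 and a nonzero y ∈ ℓ²(ℤ<0) with (J₋(χ₊) − λ)y = 0, then there exists a nonzero z ∈ ℓ²(ℤ) with (J(χ) − λ)z = 0. In particular, if J(χ') − λ is boundedly invertible for every χ' : ℤ → Fin D, then for every χ₊ : ℕ → Fin D at least one of the operators J₊(χ₊) − λ and J₋(χ₊) − λ has trivial kernel. -/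
noncomputable section

/-! An eigenvector of `J` is a solution of the three-term recurrence
`a(i-1) z(i-1) + b(i) z(i) + a(i) z(i+1) = λ z(i)` at every `i`. Gluing `α x` on `ℤ≥0` to `β y`
on `ℤ<0` solves it at every `i ∉ {-1, 0}`. At `i = 0` and `i = -1` the diagonal of `J` exceeds the
corners of `J₊` and `J₋` by `c₀ = v₀²/(ℓ₀s₋₁)` and `c₁ = v₋₁²/(ℓ₋₁s₋₁)`, so the two remaining
equations form the symmetric system `[[c₀, a(-1)], [a(-1), c₁]]` in `(α x₀, β y₋₁)`. This system
is singular, since `a(-1)² = c₀c₁`, so some `(α, β) ≠ 0` solves it. The second claim follows,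
because an eigenvector of `J(χ)` puts `λ` in its spectrum. -/

open Function

theorem IsConcat.exists_mem {D : ℕ} {B : Fin D → Block} {χ : ℤ → Fin D}
    {data : ℤ → ℝ × ℝ × ℝ} {st : ℤ → ℤ} (h : IsConcat B χ data st) (i : ℤ) :
    ∃ j, data i ∈ (B (χ j)).1 := by
  obtain ⟨hst0, hstep, hdata⟩ := h
  have hlen : ∀ j, 0 < (B (χ j)).1.length := fun j => List.length_pos_iff.mpr (B (χ j)).2.1
  -- `st j - j` is monotone, so `j ≤ st j` for `j ≥ 0` and `st j ≤ j` for `j ≤ 0`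
  have hmono : ∀ {j k : ℤ}, j ≤ k → st j - j ≤ st k - k := fun hjk =>
    monotone_int_of_le_succ (f := fun j => st j - j)
      (fun j => by have := hstep j; have := hlen j; omega) hjk
  obtain ⟨j, hj, hmax⟩ := Int.exists_greatest_of_bdd (P := fun j => st j ≤ i)
    ⟨max i 0, fun j hj => by
      by_contra hlt
      have := hmono (show 0 ≤ j by omega)
      omega⟩
    ⟨min i 0, by have := hmono (min_le_right i 0); omega⟩
  have hlt : i < st (j + 1) := lt_of_not_ge fun h => by have := hmax _ h; omega
  obtain ⟨k, rfl⟩ : ∃ k : ℕ, i = st j + k := ⟨(i - st j).toNat, by omega⟩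
  have hk : k < (B (χ j)).1.length := by rw [hstep] at hlt; omega
  exact ⟨j, hdata j k hk ▸ List.get_mem _ _⟩

theorem IsConcat.pos {D : ℕ} {B : Fin D → Block} {χ : ℤ → Fin D}
    {data : ℤ → ℝ × ℝ × ℝ} {st : ℤ → ℤ} (h : IsConcat B χ data st) (i : ℤ) :
    0 < (data i).1 ∧ 0 < (data i).2.1 ∧ 0 < (data i).2.2 :=
  let ⟨j, hj⟩ := h.exists_mem i
  (B (χ j)).2.2 _ hj

theorem memℓp_extend_zero {ι κ E : Type*} [NormedAddCommGroup E] {p : ENNReal}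
    (hp : 0 < p.toReal) {e : ι → κ} (he : Injective e) {f : ι → E} (hf : Memℓp f p) :
    Memℓp (extend e f 0) p := by
  rw [memℓp_gen_iff hp] at hf ⊢
  have : (fun k => ‖extend e f 0 k‖ ^ p.toReal) = extend e (fun i => ‖f i‖ ^ p.toReal) 0 := by
    ext k
    by_cases hk : ∃ i, e i = k
    · obtain ⟨i, rfl⟩ := hk
      simp [he.extend_apply]
    · simp [extend_apply' _ _ _ hk, Real.zero_rpow hp.ne']
  rwa [this, summable_extend_zero he]

theorem aSeq_sq (data : ℤ → ℝ × ℝ × ℝ) (i : ℤ) (hℓ : 0 ≤ (data i).2.1)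
    (hℓ' : 0 ≤ (data (i + 1)).2.1) :
    aSeq data i ^ 2 = (data i).1 ^ 2 / ((data i).2.1 * (data i).2.2) *
      ((data (i + 1)).1 ^ 2 / ((data (i + 1)).2.1 * (data i).2.2)) := by
  rw [aSeq, div_pow, mul_pow, Real.sq_sqrt (mul_nonneg hℓ hℓ')]
  ring

theorem exists_scaled_solution_of_sq_eq_mul {c₀ c₁ a : ℝ} (hc₀ : c₀ ≠ 0) (ha : a ^ 2 = c₀ * c₁)
    (X Y : ℝ) :
    ∃ α β : ℝ, (α ≠ 0 ∨ β ≠ 0) ∧ c₀ * (α * X) + a * (β * Y) = 0 ∧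
      a * (α * X) + c₁ * (β * Y) = 0 := by
  by_cases hX : X = 0
  · exact ⟨1, 0, Or.inl one_ne_zero, by simp [hX], by simp [hX]⟩
  · refine ⟨a * Y, -(c₀ * X), Or.inr (neg_ne_zero.mpr (mul_ne_zero hc₀ hX)), by ring, ?_⟩
    linear_combination X * Y * ha

theorem ContinuousLinearMap.eq_zero_of_apply_eq_smul_of_notMem_spectrum {𝕜 E : Type*}
    [NontriviallyNormedField 𝕜] [NormedAddCommGroup E] [NormedSpace 𝕜 E] [CompleteSpace E]
    {T : E →L[𝕜] E} {μ : 𝕜} (hμ : μ ∉ spectrum 𝕜 T) {z : E} (hz : T z = μ • z) : z = 0 := by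
  by_contra hz0
  rw [ContinuousLinearMap.spectrum_eq] at hμ
  exact hμ (Module.End.hasEigenvalue_of_hasEigenvector
    ⟨Module.End.mem_eigenspace_iff.mpr hz, hz0⟩).mem_spectrum

def glue (α β : ℝ) (x : Hnat) (y : Hneg) : Hint :=
  ⟨extend ((↑) : ℕ → ℤ) (α • ⇑x) 0 + extend Subtype.val (β • ⇑y) 0,
    (memℓp_extend_zero (by norm_num) Nat.cast_injective ((lp.memℓp x).const_smul α)).add
      (memℓp_extend_zero (by norm_num) Subtype.val_injective ((lp.memℓp y).const_smul β))⟩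

section glue

variable (α β : ℝ) (x : Hnat) (y : Hneg)

theorem glue_natCast (n : ℕ) : glue α β x y n = α * x n := by
  simp [glue, Nat.cast_injective.extend_apply]

theorem glue_of_neg {i : ℤ} (hi : i < 0) : glue α β x y i = β * y ⟨i, hi⟩ := by
  have : ¬∃ n : ℕ, (n : ℤ) = i := fun ⟨n, hn⟩ => by omega
  simpa [glue, extend_apply' _ _ _ this] using
    Subtype.val_injective.extend_apply (β • ⇑y) 0 ⟨i, hi⟩

end glue

theorem jacobi_glue_eq_smul {data : ℤ → ℝ × ℝ × ℝ} {J : Hint →L[ℝ] Hint} (hJ : IsJacobiOf data J)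
    {Jp : Hnat →L[ℝ] Hnat} (hJp : IsJacobiPlusOf data Jp)
    {Jm : Hneg →L[ℝ] Hneg} (hJm : IsJacobiMinusOf data Jm)
    {lam : ℝ} {x : Hnat} {y : Hneg} (hx : Jp x = lam • x) (hy : Jm y = lam • y) {α β : ℝ}
    (h₀ : (data 0).1 ^ 2 / ((data 0).2.1 * (data (-1)).2.2) * (α * x 0) +
      aSeq data (-1) * (β * y ⟨-1, by norm_num⟩) = 0)
    (h₁ : aSeq data (-1) * (α * x 0) +
      (data (-1)).1 ^ 2 / ((data (-1)).2.1 * (data (-1)).2.2) * (β * y ⟨-1, by norm_num⟩) = 0) :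
    J (glue α β x y) = lam • glue α β x y := by
  have hx' : ∀ n, Jp x n = lam * x n := fun n => by rw [hx]; rfl
  have hy' : ∀ j, Jm y j = lam * y j := fun j => by rw [hy]; rfl
  ext i
  rw [hJ, lp.coeFn_smul, Pi.smul_apply, smul_eq_mul]
  rcases (by omega : i < -1 ∨ i = -1 ∨ i = 0 ∨ 0 < i) with hi | rfl | rfl | hi
  · rw [glue_of_neg _ _ _ _ (by omega : i - 1 < 0), glue_of_neg _ _ _ _ (by omega : i < 0),
      glue_of_neg _ _ _ _ (by omega : i + 1 < 0)]
    linear_combination β * (hJm.2 y i hi).symm.trans (hy' _)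
  · rw [show (-1 : ℤ) - 1 = -2 by norm_num, show (-1 : ℤ) + 1 = ((0 : ℕ) : ℤ) by norm_num,
      glue_of_neg _ _ _ _ (by norm_num : (-2 : ℤ) < 0),
      glue_of_neg _ _ _ _ (by norm_num : (-1 : ℤ) < 0), glue_natCast]
    simp only [bSeq, show (-1 : ℤ) - 1 = -2 by norm_num]
    linear_combination h₁ + β * (hJm.1 y).symm.trans (hy' _)
  · have hz₀ : glue α β x y 0 = α * x 0 := glue_natCast α β x y 0
    rw [show (0 : ℤ) - 1 = -1 by norm_num, show (0 : ℤ) + 1 = ((1 : ℕ) : ℤ) by norm_num,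
      glue_of_neg _ _ _ _ (by norm_num : (-1 : ℤ) < 0), glue_natCast, hz₀]
    simp only [bSeq, show (0 : ℤ) - 1 = -1 by norm_num]
    linear_combination h₀ + α * (hJp.1 x).symm.trans (hx' _)
  · obtain ⟨n, rfl⟩ : ∃ n : ℕ, i = n + 1 := ⟨(i - 1).toNat, by omega⟩
    have hz₁ := glue_natCast α β x y (n + 1)
    have hz₂ := glue_natCast α β x y (n + 2)
    push_cast at hz₁ hz₂
    rw [add_sub_cancel_right, glue_natCast, hz₁, hz₂]
    linear_combination α * (hJp.2 x n).symm.trans (hx' _)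

theorem glue_ne_zero {α β : ℝ} (hαβ : α ≠ 0 ∨ β ≠ 0) {x : Hnat} {y : Hneg} (hx : x ≠ 0)
    (hy : y ≠ 0) : glue α β x y ≠ 0 := by
  intro hz
  rcases hαβ with hα | hβ
  · refine hx (lp.ext (funext fun n => ?_))
    have := congrArg (fun z : Hint => z n) hz
    simpa [glue_natCast, hα] using this
  · refine hy (lp.ext (funext fun j => ?_))
    have := congrArg (fun z : Hint => z j) hz
    simpa [glue_of_neg _ _ _ _ j.2, hβ] using this

theorem exists_eigenvector_of_eigenvectors_plus_minus {data : ℤ → ℝ × ℝ × ℝ}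
    (hpos : ∀ i, 0 < (data i).1 ∧ 0 < (data i).2.1 ∧ 0 < (data i).2.2)
    {J : Hint →L[ℝ] Hint} (hJ : IsJacobiOf data J)
    {Jp : Hnat →L[ℝ] Hnat} (hJp : IsJacobiPlusOf data Jp)
    {Jm : Hneg →L[ℝ] Hneg} (hJm : IsJacobiMinusOf data Jm) {lam : ℝ}
    {x : Hnat} (hx₀ : x ≠ 0) (hx : Jp x = lam • x) {y : Hneg} (hy₀ : y ≠ 0)
    (hy : Jm y = lam • y) :
    ∃ z : Hint, z ≠ 0 ∧ J z = lam • z := by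
  obtain ⟨hv₀, hℓ₀, -⟩ := hpos 0
  obtain ⟨-, hℓ₁, hs₁⟩ := hpos (-1)
  have ha : aSeq data (-1) ^ 2 =
      (data 0).1 ^ 2 / ((data 0).2.1 * (data (-1)).2.2) *
        ((data (-1)).1 ^ 2 / ((data (-1)).2.1 * (data (-1)).2.2)) := by
    rw [aSeq_sq data (-1) hℓ₁.le (by simpa using hℓ₀.le), neg_add_cancel, mul_comm]
  obtain ⟨α, β, hαβ, h₀, h₁⟩ :=
    exists_scaled_solution_of_sq_eq_mul (by positivity) ha (x 0) (y ⟨-1, by norm_num⟩)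
  exact ⟨glue α β x y, glue_ne_zero hαβ hx₀ hy₀, jacobi_glue_eq_smul hJ hJp hJm hx hy h₀ h₁⟩

theorem stmt_15 (D : ℕ) (B : Fin D → Block) (χp : ℕ → Fin D)
    (data : ℤ → ℝ × ℝ × ℝ) (st : ℤ → ℤ)
    (hconcat : IsConcat B (reflDouble χp) data st)
    (J : Hint →L[ℝ] Hint) (hJ : IsJacobiOf data J)
    (Jp : Hnat →L[ℝ] Hnat) (hJp : IsJacobiPlusOf data Jp)
    (Jm : Hneg →L[ℝ] Hneg) (hJm : IsJacobiMinusOf data Jm)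
    (lam : ℝ) :
    ((∃ x : Hnat, x ≠ 0 ∧ Jp x = lam • x) → (∃ y : Hneg, y ≠ 0 ∧ Jm y = lam • y) →
      ∃ z : Hint, z ≠ 0 ∧ J z = lam • z) ∧
    ((∀ (χ' : ℤ → Fin D) (data' : ℤ → ℝ × ℝ × ℝ) (st' : ℤ → ℤ), IsConcat B χ' data' st' →
        ∀ J' : Hint →L[ℝ] Hint, IsJacobiOf data' J' → lam ∉ spectrum ℝ J') →
      (∀ x : Hnat, Jp x = lam • x → x = 0) ∨ (∀ y : Hneg, Jm y = lam • y → y = 0)) := by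
  have glued : (∃ x : Hnat, x ≠ 0 ∧ Jp x = lam • x) → (∃ y : Hneg, y ≠ 0 ∧ Jm y = lam • y) →
      ∃ z : Hint, z ≠ 0 ∧ J z = lam • z := fun ⟨_, hx₀, hx⟩ ⟨_, hy₀, hy⟩ =>
    exists_eigenvector_of_eigenvectors_plus_minus hconcat.pos hJ hJp hJm hx₀ hx hy₀ hy
  refine ⟨glued, fun hres => ?_⟩
  by_contra! h
  obtain ⟨⟨x, hx, hx₀⟩, ⟨y, hy, hy₀⟩⟩ := h
  obtain ⟨z, hz₀, hz⟩ := glued ⟨x, hx₀, hx⟩ ⟨y, hy₀, hy⟩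
  exact hz₀ (ContinuousLinearMap.eq_zero_of_apply_eq_smul_of_notMem_spectrum
    (hres _ _ _ hconcat J hJ) hz)
end
end
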